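/- For integers m, n ≥ 2 and any integer s ≥ 2n + 2, there exist a smooth hypersurface Y ⊂ P^s of degree m and an (n+1)-dimensional linear subspace M ⊂ P^s such that the scheme-theoretic intersection Y ∩ M equals X_n[m], the m-fold hyperplane mH_n inside M. Explicitly, with coordinates [x_0 : ⋯ : x_s], the hypersurface Y = V(x_0^m + Σ_{k=1}^{n+1} x_k^{m−1} x_{k+n+1} + Σ_{i ≥ n+2} x_i^m) is smooth and satisfies Y ∩ {x_{n+2} = ⋯ = x_s = 0} = X_n[m]. -/

import Mathlib

/-!
Group the variables into blocks: `{x₀}`, `{xᵢ}` for `i > 2n + 2`, and the pairs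
`{x_k, x_{k+n+1}}` for `1 ≤ k ≤ n + 1`. The form is `x^m` on each singleton block and
`a^{m-1} b + b^m` on each pair block, so its partial derivatives split along the blocks. For a
pair, `(m-1) a^{m-2} b = 0` and `a^{m-1} + m b^{m-1} = 0` force `a = b = 0`, hence the partials
have no common zero but the origin. Restricting to `M = {x_{n+2} = ⋯ = x_s = 0}` kills every
term except `x₀^m`, because each mixed term `x_k^{m-1} x_{k+n+1}` is linear in a vanishing
variable.
-/

open MvPolynomial

lemma Fin.val_add_ofNat_of_lt {N a : ℕ} (i : Fin (N + 1)) (h : (i : ℕ) + a < N + 1) :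
    ((i + Fin.ofNat (N + 1) a : Fin (N + 1)) : ℕ) = i + a := by
  rw [Fin.val_add, Fin.val_ofNat, Nat.mod_eq_of_lt (by omega : a < N + 1), Nat.mod_eq_of_lt h]

lemma eq_zero_and_eq_zero_of_pair_pderivs_eq_zero {R : Type*} [CommRing R] [IsDomain R] {d : ℕ}
    (hd : (d : R) ≠ 0) (hd₁ : (d + 1 : R) ≠ 0) {a b : R}
    (ha : d * a ^ (d - 1) * b = 0) (hb : (d + 1) * b ^ d + a ^ d = 0) : a = 0 ∧ b = 0 := by
  have hd₀ : d ≠ 0 := by rintro rfl; simp at hd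
  rcases mul_eq_zero.mp ha with ha | rfl
  · obtain rfl : a = 0 := (pow_eq_zero_iff'.mp ((mul_eq_zero.mp ha).resolve_left hd)).1
    simp only [zero_pow hd₀, add_zero, mul_eq_zero, hd₁, false_or] at hb
    exact ⟨rfl, (pow_eq_zero_iff'.mp hb).1⟩
  · simp only [zero_pow hd₀, mul_zero, zero_add] at hb
    exact ⟨(pow_eq_zero_iff'.mp hb).1, rfl⟩

namespace MvPolynomial

variable {σ R : Type*} [CommRing R] [DecidableEq σ]

lemma pderiv_sum_X_pow (U : Finset σ) (m : ℕ) (i : σ) :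
    pderiv i (∑ u ∈ U, X u ^ m : MvPolynomial σ R) =
      if i ∈ U then (m : MvPolynomial σ R) * X i ^ (m - 1) else 0 := by
  simp [Pi.single_apply]

lemma pderiv_sum_X_pow_mul_X (P : Finset σ) (τ : σ → σ) (d : ℕ) (i : σ) :
    pderiv i (∑ p ∈ P, X p ^ d * X (τ p) : MvPolynomial σ R) =
      (if i ∈ P then (d : MvPolynomial σ R) * X i ^ (d - 1) * X (τ i) else 0) +
        ∑ p ∈ P with τ p = i, X p ^ d := by
  simp [Pi.single_apply, Finset.sum_filter, Finset.sum_add_distrib, Finset.sum_ite_eq',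
    mul_comm, add_comm]

variable [Fintype σ]

/-- With `P = {1, …, n+1}`, `τ k = k + n + 1` and `d = m - 1` this is the paper's form
`x₀^m + ∑ x_k^(m-1) x_(k+n+1) + ∑_{i ≥ n+2} x_i^m`. -/
noncomputable def fermatWithPairs (P : Finset σ) (τ : σ → σ) (d : ℕ) : MvPolynomial σ R :=
  ∑ u ∈ Pᶜ, X u ^ (d + 1) + ∑ p ∈ P, X p ^ d * X (τ p)

variable {P : Finset σ} {τ : σ → σ} {d : ℕ}

lemma isHomogeneous_fermatWithPairs :
    (fermatWithPairs P τ d : MvPolynomial σ R).IsHomogeneous (d + 1) :=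
  (IsHomogeneous.sum _ _ _ fun u _ => isHomogeneous_X_pow u _).add
    (IsHomogeneous.sum _ _ _ fun p _ => (isHomogeneous_X_pow p d).mul (isHomogeneous_X R (τ p)))

lemma eval_pderiv_fermatWithPairs_of_mem (hτ : ∀ p ∈ P, τ p ∉ P) {p : σ} (hp : p ∈ P)
    (x : σ → R) : eval x (pderiv p (fermatWithPairs P τ d)) = d * x p ^ (d - 1) * x (τ p) := by
  have hfiber : ∀ q ∈ P, τ q ≠ p := fun q hq h => hτ q hq (h ▸ hp)
  rw [fermatWithPairs, map_add, pderiv_sum_X_pow, pderiv_sum_X_pow_mul_X]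
  simp [hp, Finset.filter_false_of_mem hfiber]

lemma eval_pderiv_fermatWithPairs_of_notMem {i : σ} (hi : i ∉ P) (x : σ → R) :
    eval x (pderiv i (fermatWithPairs P τ d)) =
      (d + 1) * x i ^ d + ∑ p ∈ P with τ p = i, x p ^ d := by
  rw [fermatWithPairs, map_add, pderiv_sum_X_pow, pderiv_sum_X_pow_mul_X]
  simp [hi]

theorem eq_zero_of_forall_eval_pderiv_fermatWithPairs_eq_zero [IsDomain R]
    (hτ : ∀ p ∈ P, τ p ∉ P) (hτ_inj : Set.InjOn τ P) (hd : (d : R) ≠ 0) (hd₁ : (d + 1 : R) ≠ 0)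
    {x : σ → R} (hx : ∀ i, eval x (pderiv i (fermatWithPairs P τ d)) = 0) : x = 0 := by
  have pair (p : σ) (hp : p ∈ P) : x p = 0 ∧ x (τ p) = 0 := by
    refine eq_zero_and_eq_zero_of_pair_pderivs_eq_zero hd hd₁ ?_ ?_
    · rw [← eval_pderiv_fermatWithPairs_of_mem hτ hp, hx]
    · have hfiber : {q ∈ P | τ q = τ p} = {p} := by
        ext q
        simp only [Finset.mem_filter, Finset.mem_singleton]
        exact ⟨fun h => hτ_inj h.1 hp h.2, by rintro rfl; exact ⟨hp, rfl⟩⟩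
      simpa [eval_pderiv_fermatWithPairs_of_notMem (hτ p hp), hfiber] using hx (τ p)
  funext i
  by_cases hi : i ∈ P
  · exact (pair i hi).1
  by_cases hpartner : ∃ p ∈ P, τ p = i
  · obtain ⟨p, hp, rfl⟩ := hpartner
    exact (pair p hp).2
  push Not at hpartner
  have hxi := hx i
  simp only [eval_pderiv_fermatWithPairs_of_notMem hi, Finset.filter_false_of_mem hpartner,
    Finset.sum_empty, add_zero, mul_eq_zero, hd₁, false_or] at hxi
  exact (pow_eq_zero_iff'.mp hxi).1

lemma aeval_fermatWithPairs {S : Type*} [CommRing S] [Algebra R S] {φ : σ → S}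
    (hφ : ∀ p ∈ P, φ (τ p) = 0) :
    aeval φ (fermatWithPairs P τ d : MvPolynomial σ R) = ∑ u ∈ Pᶜ, φ u ^ (d + 1) := by
  simpa [fermatWithPairs] using Finset.sum_eq_zero fun p hp => by simp [hφ p hp]

end MvPolynomial

theorem smooth_hypersurface_meeting_linear_space_in_thick_hyperplane_general
    (k : Type*) [Field k] [CharZero k]
    (m n s : ℕ) (hm : 2 ≤ m) (hs : 2 * n + 2 ≤ s) :
    ∃ f : MvPolynomial (Fin (s + 1)) k,
      f.IsHomogeneous m ∧
      (∀ x : Fin (s + 1) → k, x ≠ 0 → ∃ i, eval x (pderiv i f) ≠ 0) ∧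
      aeval (fun i : Fin (s + 1) =>
          if (i : ℕ) ≤ n + 1 then (X i : MvPolynomial (Fin (s + 1)) k) else 0) f
        = X (0 : Fin (s + 1)) ^ m := by
  obtain ⟨d, rfl⟩ : ∃ d, m = d + 1 := ⟨m - 1, by omega⟩
  let P : Finset (Fin (s + 1)) := {i | 1 ≤ (i : ℕ) ∧ (i : ℕ) ≤ n + 1}
  let τ : Fin (s + 1) → Fin (s + 1) := (· + Fin.ofNat (s + 1) (n + 1))
  have mem_P (i : Fin (s + 1)) : i ∈ P ↔ 1 ≤ (i : ℕ) ∧ (i : ℕ) ≤ n + 1 := by simp [P]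
  have τ_gt (p : Fin (s + 1)) (hp : p ∈ P) : n + 1 < (τ p : ℕ) := by
    rw [mem_P] at hp
    rw [Fin.val_add_ofNat_of_lt p (by omega)]
    omega
  have hτ (p : Fin (s + 1)) (hp : p ∈ P) : τ p ∉ P :=
    fun hτp => (τ_gt p hp).not_ge ((mem_P _).mp hτp).2
  refine ⟨fermatWithPairs P τ d, isHomogeneous_fermatWithPairs, fun x hx => ?_, ?_⟩
  · by_contra! h
    exact hx (eq_zero_of_forall_eval_pderiv_fermatWithPairs_eq_zero hτ (add_left_injective _).injOn
      (Nat.cast_ne_zero.mpr (by omega)) (Nat.cast_add_one_ne_zero d) h)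
  · rw [aeval_fermatWithPairs fun p hp => if_neg (τ_gt p hp).not_ge,
      Finset.sum_eq_single_of_mem 0 (by simp [mem_P])]
    · simp
    · intro i hi hi₀
      have : (i : ℕ) ≠ 0 := Fin.val_ne_zero_iff.mpr hi₀
      rw [Finset.mem_compl, mem_P] at hi
      simp [show ¬(i : ℕ) ≤ n + 1 by omega]

/-- **Lemma (paper, Lemma 3.1).** For integers `m, n ≥ 2` and any `s ≥ 2n + 2`,
there exist a smooth hypersurface `Y ⊂ ℙ^s` of degree `m` and an
`(n+1)`-dimensional linear subspace `M ⊂ ℙ^s` such that the scheme-theoretic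
intersection `Y ∩ M` equals `Xₙ[m]`, the `m`-fold hyperplane `m·Hₙ` inside `M`.

Explicitly, in coordinates `[x₀ : ⋯ : x_s]` one may take
`Y = V(x₀^m + ∑_{k=1}^{n+1} x_k^{m−1} x_{k+n+1} + ∑_{i ≥ n+2} x_i^m)` and
`M = {x_{n+2} = ⋯ = x_s = 0}`. Formally: there is a homogeneous polynomial `f`
of degree `m` in `s + 1` variables such that
* `Y = V(f)` is smooth (by the Jacobian criterion, valid in characteristic
  zero: the partial derivatives of `f` have no common zero except the origin),
* substituting `xᵢ = 0` for all `i ≥ n + 2` turns `f` into `x₀^m`, i.e.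
  `Y ∩ M` is the `m`-fold hyperplane `{x₀ = 0}` with multiplicity `m` in `M`. -/
theorem smooth_hypersurface_meeting_linear_space_in_thick_hyperplane
    (k : Type*) [Field k] [IsAlgClosed k] [CharZero k]
    (m n s : ℕ) (hm : 2 ≤ m) (hn : 2 ≤ n) (hs : 2 * n + 2 ≤ s) :
    ∃ f : MvPolynomial (Fin (s + 1)) k,
      f.IsHomogeneous m ∧
      (∀ x : Fin (s + 1) → k, x ≠ 0 → ∃ i, eval x (pderiv i f) ≠ 0) ∧
      aeval (fun i : Fin (s + 1) =>
          if (i : ℕ) ≤ n + 1 then (X i : MvPolynomial (Fin (s + 1)) k) else 0) f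
        = X (0 : Fin (s + 1)) ^ m :=
  smooth_hypersurface_meeting_linear_space_in_thick_hyperplane_general k m n s hm hs
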